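/- Let $G$ be a topological group, let $(I, \leq)$ be a nonempty linearly ordered set, and let $(H_i)_{i \in I}$ be a family of locally compact closed subgroups of $G$ such that $H_i \subseteq H_j$ whenever $i \leq j$. Put $H = \bigcap_{i \in I} H_i$. The natural maps $G/H_j \to G/H_i$ (for $i \leq j$) form a projective system of topological spaces. If all quotients $H_i/H$ are compact, then the natural map $G/H \to \varprojlim_{i} G/H_i$ is a homeomorphism. -/

import Mathlib

open scoped Manifold unitInterval Pointwise

/-- `p : E → B` has the homotopy lifting property with respect to `Z`:
any homotopy `f : Z × [0,1] → B` with a lift `f₀` of its time-`0` slice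
extends to a lift `F : Z × [0,1] → E`. -/
def HasHLP {E B : Type*} [TopologicalSpace E] [TopologicalSpace B]
    (Z : Type*) [TopologicalSpace Z] (p : E → B) : Prop :=
  ∀ (f : Z × I → B) (f₀ : Z → E), Continuous f → Continuous f₀ →
    (∀ z, p (f₀ z) = f (z, 0)) →
    ∃ F : Z × I → E, Continuous F ∧ (∀ z, F (z, 0) = f₀ z) ∧ ∀ x, p (F x) = f x

/-- A topological group is a Lie group if it carries a smooth manifold structure
(modelled on some `ℝⁿ`) making multiplication and inversion smooth. -/
def IsLieGroup (G : Type*) [Group G] [TopologicalSpace G] : Prop :=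
  ∃ n : ℕ, ∃ cs : ChartedSpace (EuclideanSpace ℝ (Fin n)) G,
    letI := cs
    LieGroup (𝓡 n) (⊤ : ℕ∞) G

/-- A topological group is a locally compact pro-Lie group if it is locally compact and
every identity neighborhood contains a compact normal subgroup `N` such that `L/N`
is a Lie group. -/
def IsLocallyCompactProLieGroup (L : Type*) [Group L] [TopologicalSpace L] : Prop :=
  LocallyCompactSpace L ∧
    ∀ U ∈ nhds (1 : L), ∃ N : Subgroup L, (N : Set L) ⊆ U ∧ IsCompact (N : Set L) ∧
      ∃ hN : N.Normal, letI := hN; IsLieGroup (L ⧸ N)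

/-- The natural map `G/A → G/B`, `gA ↦ gB`, for subgroups `A ≤ B`. -/
def cosetMap {G : Type*} [Group G] {A B : Subgroup G} (h : A ≤ B) :
    G ⧸ A → G ⧸ B :=
  Quotient.map' id fun a b hab => by
    rw [QuotientGroup.leftRel_apply] at hab ⊢
    exact h hab

/-- `p` is a locally trivial bundle: every point `b` of the base has an open
neighborhood `V` over which `p` is trivial, with fiber the fiber over `b`. -/
def IsLocallyTrivial {E B : Type*} [TopologicalSpace E] [TopologicalSpace B]
    (p : E → B) : Prop :=
  ∀ b : B, ∃ V : Set B, IsOpen V ∧ b ∈ V ∧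
    ∃ h : ↥V × ↥(p ⁻¹' {b}) ≃ₜ ↥(p ⁻¹' V), ∀ x, p (h x : E) = (x.1 : B)

/-- `p` is a locally trivial bundle with fiber `F`. -/
def IsLocallyTrivialWithFiber {E B : Type*} [TopologicalSpace E] [TopologicalSpace B]
    (F : Type*) [TopologicalSpace F] (p : E → B) : Prop :=
  ∀ b : B, ∃ V : Set B, IsOpen V ∧ b ∈ V ∧
    ∃ h : ↥V × F ≃ₜ ↥(p ⁻¹' V), ∀ x, p (h x : E) = (x.1 : B)

/-- The projective limit of the system of coset spaces `G/H i` along a monotone family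
of subgroups, realized as the subspace of the product `∀ i, G/H i` consisting of
compatible families. -/
abbrev cosetProjLimit {G : Type*} [Group G] [TopologicalSpace G] {ι : Type*} [Preorder ι]
    (H : ι → Subgroup G) (hmono : Monotone H) : Type _ :=
  {x : ∀ i, G ⧸ H i // ∀ ⦃i j : ι⦄ (hij : i ≤ j), cosetMap (hmono hij) (x i) = x j}

/-- In a locally compact group, if `L ⧸ N` is compact then `L = C * N` for a compact `C`. -/
lemma cocompact_decomp {L : Type*} [Group L] [TopologicalSpace L] [IsTopologicalGroup L]
    [LocallyCompactSpace L] (N : Subgroup L) [CompactSpace (L ⧸ N)] :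
    ∃ C : Set L, IsCompact C ∧ ∀ l : L, ∃ c ∈ C, ∃ n ∈ N, l = c * n := by
  obtain ⟨K, hKc, hK1⟩ := exists_compact_mem_nhds (1 : L)
  have h1K : (1 : L) ∈ interior K := mem_interior_iff_mem_nhds.2 hK1
  have hcover : (Set.univ : Set (L ⧸ N)) ⊆
      ⋃ l : L, (QuotientGroup.mk : L → L ⧸ N) '' (l • interior K) := by
    rintro x -
    obtain ⟨l, rfl⟩ := QuotientGroup.mk_surjective x
    refine Set.mem_iUnion.2 ⟨l, ⟨l * 1, Set.smul_mem_smul_set h1K, by simp⟩⟩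
  obtain ⟨t, ht⟩ := isCompact_univ.elim_finite_subcover
    (fun l : L => (QuotientGroup.mk : L → L ⧸ N) '' (l • interior K))
    (fun l => QuotientGroup.isOpenMap_coe _ (isOpen_interior.smul l))
    hcover
  refine ⟨⋃ l ∈ t, l • K, t.isCompact_biUnion (fun l _ => hKc.smul l), ?_⟩
  intro x
  have := ht (Set.mem_univ (QuotientGroup.mk x : L ⧸ N))
  simp only [Set.mem_iUnion] at this
  obtain ⟨l, hlt, y, ⟨k, hk, rfl⟩, hy⟩ := this
  have hn : (l * k)⁻¹ * x ∈ N := QuotientGroup.eq.1 hy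
  exact ⟨l * k, Set.mem_iUnion₂.2 ⟨l, hlt, Set.smul_mem_smul_set (interior_subset hk)⟩,
    (l * k)⁻¹ * x, hn, by group⟩


lemma key_open {G : Type*} [Group G] [TopologicalSpace G] [IsTopologicalGroup G] [T2Space G]
    {ι : Type*} [LinearOrder ι] [Nonempty ι] (H : ι → Subgroup G) (hmono : Monotone H)
    (hcl : ∀ i, IsClosed (H i : Set G))
    (hdecomp : ∀ i, ∃ C : Set G, IsCompact C ∧ C ⊆ (H i : Set G) ∧
      ∀ h ∈ H i, ∃ c ∈ C, ∃ n ∈ ⨅ j, H j, h = c * n)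
    {U : Set G} (hU : IsOpen U) (hUsat : ∀ u ∈ U, ∀ n ∈ ⨅ j, H j, u * n ∈ U)
    {g : G} (hg : g ∈ U) :
    ∃ i, ∃ V : Set G, IsOpen V ∧ g ∈ V ∧ V ⊆ U ∧ ∀ v ∈ V, ∀ h ∈ H i, v * h ∈ V := by
  -- translate so that the point is `1`
  set U₁ : Set G := (fun x => g * x) ⁻¹' U with hU₁def
  have hU₁ : IsOpen U₁ := hU.preimage (continuous_mul_left g)
  have h1U₁ : (1 : G) ∈ U₁ := by simpa [hU₁def]
  have hU₁sat : ∀ u ∈ U₁, ∀ n ∈ ⨅ j, H j, u * n ∈ U₁ := by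
    intro u hu n hn
    simpa [hU₁def, mul_assoc] using hUsat _ hu n hn
  -- Step A: find `i₁` with `H i₁ ⊆ U₁`
  obtain ⟨i₀⟩ := ‹Nonempty ι›
  obtain ⟨C, hCc, hCsub, hCd⟩ := hdecomp i₀
  have hstep : ∃ j : ι, ((H (min j i₀) : Set G) ∩ U₁ᶜ) ∩ C = ∅ := by
    by_contra hcon
    push_neg at hcon
    have hne : ∀ j, (((H (min j i₀) : Set G) ∩ U₁ᶜ) ∩ C).Nonempty := by
      intro j
      exact hcon j
    have hdir : Directed (· ⊇ ·) (fun j => ((H (min j i₀) : Set G) ∩ U₁ᶜ) ∩ C) := by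
      intro j k
      refine ⟨min j k, ?_, ?_⟩ <;>
        exact Set.inter_subset_inter_left _ (Set.inter_subset_inter_left _
          (hmono (by simp [le_min_iff, min_le_iff, le_total])))
    obtain ⟨z, hz⟩ := IsCompact.nonempty_iInter_of_directed_nonempty_isCompact_isClosed
      _ hdir hne
      (fun j => hCc.inter_left ((hcl _).inter hU₁.isClosed_compl))
      (fun j => ((hcl _).inter hU₁.isClosed_compl).inter hCc.isClosed)
    simp only [Set.mem_iInter, Set.mem_inter_iff, Set.mem_compl_iff] at hz
    have hzH : z ∈ ⨅ j, H j := by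
      rw [Subgroup.mem_iInf]
      intro j
      rcases le_total j i₀ with h | h
      · have := (hz j).1.1; rwa [min_eq_left h] at this
      · exact hmono h (hCsub (hz i₀).2)
    exact (hz i₀).1.2 (by simpa using hU₁sat 1 h1U₁ z hzH)
  obtain ⟨j, hjempty⟩ := hstep
  set i₁ := min j i₀ with hi₁
  have hHsubU : (H i₁ : Set G) ⊆ U₁ := by
    intro h hh
    obtain ⟨c, hc, n, hn, rfl⟩ := hCd h (hmono (min_le_right j i₀) hh)
    have hcH : c ∈ (H i₁ : Set G) := by
      have : c = (c * n) * n⁻¹ := by group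
      rw [this]
      exact mul_mem hh (inv_mem ((Subgroup.mem_iInf.1 hn) i₁))
    have hcU : c ∈ U₁ := by
      by_contra hcU
      exact Set.eq_empty_iff_forall_notMem.1 hjempty c ⟨⟨hcH, hcU⟩, hc⟩
    exact hU₁sat c hcU n hn
  -- Step B: thicken
  obtain ⟨C₁, hC₁c, hC₁sub, hC₁d⟩ := hdecomp i₁
  obtain ⟨W, hW, hWC⟩ := compact_open_separated_mul_left hC₁c hU₁
    (fun x hx => hHsubU (hC₁sub hx))
  set O := interior W with hO
  have hOopen : IsOpen O := isOpen_interior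
  have h1O : (1 : G) ∈ O := mem_interior_iff_mem_nhds.2 hW
  set V₁ : Set G := O * (H i₁ : Set G) with hV₁def
  have hV₁open : IsOpen V₁ := hOopen.mul_right
  have h1V₁ : (1 : G) ∈ V₁ := ⟨1, h1O, 1, (H i₁).one_mem, mul_one 1⟩
  have hV₁U : V₁ ⊆ U₁ := by
    rintro x ⟨o, ho, h, hh, rfl⟩
    obtain ⟨c, hc, n, hn, rfl⟩ := hC₁d h hh
    have : o * c ∈ U₁ := hWC (Set.mul_mem_mul (interior_subset ho) hc)
    simpa [mul_assoc] using hU₁sat _ this n hn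
  have hV₁sat : ∀ v ∈ V₁, ∀ h ∈ H i₁, v * h ∈ V₁ := by
    rintro v ⟨o, ho, h', hh', rfl⟩ h hh
    exact ⟨o, ho, h' * h, mul_mem hh' hh, (mul_assoc _ _ _).symm⟩
  refine ⟨i₁, (fun x => g⁻¹ * x) ⁻¹' V₁, hV₁open.preimage (continuous_mul_left g⁻¹),
    by simpa, ?_, ?_⟩
  · intro x hx
    have := hV₁U hx
    simpa [hU₁def] using this
  · intro v hv h hh
    have := hV₁sat _ hv h hh
    simpa [mul_assoc] using this


section Aux

lemma cosetMap_mk' {G : Type*} [Group G] {A B : Subgroup G} (h : A ≤ B) (g : G) :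
    cosetMap h (QuotientGroup.mk g) = QuotientGroup.mk g := rfl

lemma continuous_cosetMap {G : Type*} [Group G] [TopologicalSpace G] {A B : Subgroup G}
    (h : A ≤ B) : Continuous (cosetMap h) := by
  rw [(QuotientGroup.isQuotientMap_mk A).continuous_iff]
  exact QuotientGroup.continuous_mk

end Aux

/-- **Lemma.** Let `G` be a topological group, `(I, ≤)` a nonempty linearly ordered set and
`(H i)` a family of locally compact closed subgroups with `H i ⊆ H j` for `i ≤ j`. Put
`H = ⋂ i, H i`. If all the quotients `H i / H` are compact, then the natural map
`G/H → lim← G/H i` is a homeomorphism. -/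
theorem cosetProjLimit_homeomorph {G : Type*} [Group G] [TopologicalSpace G]
    [IsTopologicalGroup G] [T2Space G] {ι : Type*} [LinearOrder ι] [Nonempty ι]
    (H : ι → Subgroup G) (hmono : Monotone H)
    (hcl : ∀ i, IsClosed (H i : Set G)) (hlc : ∀ i, LocallyCompactSpace (H i))
    (hcpt : ∀ i, CompactSpace (↥(H i) ⧸ ((⨅ j, H j).subgroupOf (H i)))) :
    ∃ f : G ⧸ (⨅ i, H i) → cosetProjLimit H hmono,
      (∀ g : G, (f (QuotientGroup.mk g)).val = fun i => (QuotientGroup.mk g : G ⧸ H i)) ∧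
      IsHomeomorph f := by
  have hNle : ∀ i, (⨅ j, H j) ≤ H i := fun i => iInf_le H i
  -- the cocompactness decomposition `H i = Cᵢ * (⨅ j, H j)` with `Cᵢ` compact
  have hdecomp : ∀ i, ∃ C : Set G, IsCompact C ∧ C ⊆ (H i : Set G) ∧
      ∀ h ∈ H i, ∃ c ∈ C, ∃ n ∈ ⨅ j, H j, h = c * n := by
    intro i
    letI := hlc i; letI := hcpt i
    obtain ⟨C, hCc, hCd⟩ := cocompact_decomp ((⨅ j, H j).subgroupOf (H i))
    refine ⟨Subtype.val '' C, hCc.image continuous_subtype_val, ?_, ?_⟩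
    · rintro _ ⟨c, -, rfl⟩; exact c.2
    · intro h hh
      obtain ⟨c, hc, n, hn, hmul⟩ := hCd ⟨h, hh⟩
      exact ⟨c, ⟨c, hc, rfl⟩, n, Subgroup.mem_subgroupOf.1 hn, congrArg Subtype.val hmul⟩
  -- the natural map
  set f : G ⧸ (⨅ i, H i) → cosetProjLimit H hmono := fun x =>
    ⟨fun i => cosetMap (hNle i) x, fun i j hij => by
      induction x using QuotientGroup.induction_on with
      | _ g => rfl⟩ with hfdef
  have hf1 : ∀ g : G, (f (QuotientGroup.mk g)).val =
      fun i => (QuotientGroup.mk g : G ⧸ H i) := fun g => rfl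
  -- surjectivity
  have hsurj : Function.Surjective f := by
    rintro ⟨x, hx⟩
    choose g hgx using fun i => QuotientGroup.mk_surjective (x i)
    set S : ι → Set G := fun i => {a | (QuotientGroup.mk a : G ⧸ H i) = x i} with hSdef
    have hSmono : ∀ {i j : ι}, i ≤ j → S i ⊆ S j := by
      intro i j hij a ha
      have h1 : cosetMap (hmono hij) (x i) = x j := hx hij
      show (QuotientGroup.mk a : G ⧸ H j) = x j
      rw [← h1, ← ha]
      exact (cosetMap_mk' _ a).symm
    have hSclosed : ∀ i, IsClosed (S i) := by
      intro i
      have heq : S i = (fun a => (g i)⁻¹ * a) ⁻¹' (H i : Set G) := by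
        ext a
        simp only [hSdef, Set.mem_setOf_eq, Set.mem_preimage, SetLike.mem_coe, ← hgx i]
        exact ⟨fun h => QuotientGroup.eq.1 h.symm, fun h => (QuotientGroup.eq.2 h).symm⟩
      rw [heq]; exact (hcl i).preimage (continuous_mul_left _)
    obtain ⟨i₀⟩ := ‹Nonempty ι›
    obtain ⟨C, hCc, hCsub, hCd⟩ := hdecomp i₀
    set T : ι → Set G := fun i => S (min i i₀) ∩ (g i₀ • C) with hTdef
    have hTne : ∀ i, (T i).Nonempty := by
      intro i
      have ha : g (min i i₀) ∈ S (min i i₀) := hgx _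
      have ha0 : g (min i i₀) ∈ S i₀ := hSmono (min_le_right i i₀) ha
      have hmem : (g i₀)⁻¹ * g (min i i₀) ∈ H i₀ := by
        have h2 : (QuotientGroup.mk (g (min i i₀)) : G ⧸ H i₀) = x i₀ := ha0
        rw [← hgx i₀] at h2
        exact QuotientGroup.eq.1 h2.symm
      obtain ⟨c, hc, n, hn, hcn⟩ := hCd _ hmem
      refine ⟨g (min i i₀) * n⁻¹, ?_, ?_⟩
      · show (QuotientGroup.mk _ : G ⧸ H (min i i₀)) = x (min i i₀)
        rw [QuotientGroup.mk_mul_of_mem _ (inv_mem (hNle (min i i₀) hn))]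
        exact hgx _
      · refine ⟨c, hc, ?_⟩
        have h3 : g (min i i₀) = g i₀ * (c * n) := by
          rw [← hcn]; group
        show g i₀ • c = g (min i i₀) * n⁻¹
        rw [smul_eq_mul, h3]; group
    have hTdir : Directed (· ⊇ ·) T := by
      intro i j
      refine ⟨min i j, ?_, ?_⟩ <;>
        exact Set.inter_subset_inter_left _
          (hSmono (min_le_min (by simp [min_le_iff, le_total]) le_rfl))
    have hTcpt : ∀ i, IsCompact (T i) := fun i => (hCc.smul (g i₀)).inter_left (hSclosed _)
    have hTcl : ∀ i, IsClosed (T i) := fun i => (hSclosed _).inter (hCc.smul (g i₀)).isClosed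
    obtain ⟨a, ha⟩ :=
      IsCompact.nonempty_iInter_of_directed_nonempty_isCompact_isClosed T hTdir hTne hTcpt hTcl
    refine ⟨QuotientGroup.mk a, ?_⟩
    apply Subtype.ext
    rw [hf1 a]
    funext i
    exact hSmono (min_le_left i i₀) (Set.mem_iInter.1 ha i).1
  refine ⟨f, hf1, ?_, ?_, ?_, hsurj⟩
  -- continuity
  · exact Continuous.subtype_mk (continuous_pi fun i => continuous_cosetMap (hNle i)) _
  -- openness
  · intro O hO
    rw [isOpen_iff_forall_mem_open]
    rintro _ ⟨x₀, hx₀O, rfl⟩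
    induction x₀ using QuotientGroup.induction_on with
    | _ g₀ =>
    set U : Set G := (QuotientGroup.mk : G → G ⧸ ⨅ i, H i) ⁻¹' O with hUdef
    have hUopen : IsOpen U := hO.preimage QuotientGroup.continuous_mk
    have hUsat : ∀ u ∈ U, ∀ n ∈ ⨅ j, H j, u * n ∈ U := by
      intro u hu n hn
      show (QuotientGroup.mk (u * n) : G ⧸ ⨅ i, H i) ∈ O
      rwa [QuotientGroup.mk_mul_of_mem u hn]
    have hg₀U : g₀ ∈ U := hx₀O
    obtain ⟨i, V, hVopen, hgV, hVU, hVsat⟩ := key_open H hmono hcl hdecomp hUopen hUsat hg₀U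
    refine ⟨{y : cosetProjLimit H hmono |
        y.val i ∈ (QuotientGroup.mk : G → G ⧸ H i) '' V}, ?_, ?_, ?_⟩
    · rintro y hy
      obtain ⟨z, rfl⟩ := hsurj y
      induction z using QuotientGroup.induction_on with
      | _ a =>
      obtain ⟨v, hvV, hveq⟩ := hy
      have hva : v⁻¹ * a ∈ H i := QuotientGroup.eq.1 hveq
      have haV : a ∈ V := by
        have := hVsat v hvV _ hva
        rwa [mul_inv_cancel_left] at this
      exact ⟨QuotientGroup.mk a, hVU haV, rfl⟩
    · exact (QuotientGroup.isOpenMap_coe V hVopen).preimage ((continuous_apply i).comp continuous_subtype_val)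
    · exact ⟨g₀, hgV, rfl⟩
  -- injectivity
  · intro a b hab
    induction a using QuotientGroup.induction_on with
    | _ a =>
    induction b using QuotientGroup.induction_on with
    | _ b =>
    refine QuotientGroup.eq.2 (Subgroup.mem_iInf.2 fun i => ?_)
    have h1 : (QuotientGroup.mk a : G ⧸ H i) = QuotientGroup.mk b :=
      congrFun ((hf1 a) ▸ (hf1 b) ▸ congrArg Subtype.val hab) i
    exact QuotientGroup.eq.1 h1
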